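/- Let S and W be symmetric positive definite m×m real matrices with d·W ≤ S ≤ D·W in the Loewner order, for constants 0 < d ≤ D. Then for all γ ≥ 0, the matrices S_γ := (S⁻¹ + γW⁻¹)⁻¹ and W_γ := ((1+γ)W⁻¹)⁻¹ satisfy ((1+γ)d/(1+γd))·W_γ ≤ S_γ ≤ ((1+γ)D/(1+γD))·W_γ. -/

import Mathlib

/-!
Inversion reverses the Loewner order on positive definite matrices: `2 xᵀy - yᵀAy ≤ xᵀA⁻¹x` for
every `y`, and at `y = B⁻¹x` the hypothesis `A ≤ B` bounds the left side below by `xᵀB⁻¹x`.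
Inverting `dW ≤ S ≤ DW` gives `(D⁻¹ + γ)W⁻¹ ≤ S⁻¹ + γW⁻¹ ≤ (d⁻¹ + γ)W⁻¹`, and inverting once more
gives the claim, because `W_γ = (1 + γ)⁻¹W` and `(1 + γ)d / (1 + γd) = (1 + γ)(d⁻¹ + γ)⁻¹`.
-/

open Matrix

namespace Matrix

variable {n : Type*} [Fintype n] {A B : Matrix n n ℝ}

lemma IsHermitian.dotProduct_mulVec_comm (hA : A.IsHermitian) (u v : n → ℝ) :
    u ⬝ᵥ A *ᵥ v = v ⬝ᵥ A *ᵥ u := by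
  rw [dotProduct_mulVec, dotProduct_comm, ← mulVec_transpose,
    ← conjTranspose_eq_transpose_of_trivial, hA.eq]

lemma dotProduct_smul_mulVec (c : ℝ) (A : Matrix n n ℝ) (x : n → ℝ) :
    x ⬝ᵥ (c • A) *ᵥ x = c * (x ⬝ᵥ A *ᵥ x) := by
  rw [smul_mulVec, dotProduct_smul, smul_eq_mul]

variable [DecidableEq n]

lemma inv_smul_of_ne_zero {c : ℝ} (hc : c ≠ 0) (hA : IsUnit A.det) : (c • A)⁻¹ = c⁻¹ • A⁻¹ := by
  let := invertibleOfNonzero hc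
  rw [inv_smul A c hA, invOf_eq_inv]

namespace PosDef

/-- The right side is the maximum of the left side over `y`, attained at `y = A⁻¹ x`. -/
lemma two_mul_dotProduct_sub_le (hA : A.PosDef) (x y : n → ℝ) :
    2 * (x ⬝ᵥ y) - y ⬝ᵥ A *ᵥ y ≤ x ⬝ᵥ A⁻¹ *ᵥ x := by
  set u := A⁻¹ *ᵥ x
  have hAu : A *ᵥ u = x := by
    rw [mulVec_mulVec, mul_nonsing_inv A hA.det_pos.ne'.isUnit, one_mulVec]
  have hxx : x ⬝ᵥ A⁻¹ *ᵥ x = u ⬝ᵥ A *ᵥ u := by rw [hAu, dotProduct_comm]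
  have hxy : x ⬝ᵥ y = u ⬝ᵥ A *ᵥ y := by
    rw [← hAu, dotProduct_comm, hA.isHermitian.dotProduct_mulVec_comm]
  have hsq := hA.posSemidef.dotProduct_mulVec_nonneg (u - y)
  simp only [star_trivial, mulVec_sub, dotProduct_sub, sub_dotProduct,
    hA.isHermitian.dotProduct_mulVec_comm y u] at hsq
  linarith

lemma dotProduct_inv_mulVec_le_of_le (hA : A.PosDef) (hB : B.PosDef)
    (h : ∀ x, x ⬝ᵥ A *ᵥ x ≤ x ⬝ᵥ B *ᵥ x) (x : n → ℝ) :
    x ⬝ᵥ B⁻¹ *ᵥ x ≤ x ⬝ᵥ A⁻¹ *ᵥ x := by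
  set y := B⁻¹ *ᵥ x
  have hBy : B *ᵥ y = x := by
    rw [mulVec_mulVec, mul_nonsing_inv B hB.det_pos.ne'.isUnit, one_mulVec]
  have hyBy : y ⬝ᵥ B *ᵥ y = x ⬝ᵥ y := by rw [hBy, dotProduct_comm]
  have := hA.two_mul_dotProduct_sub_le x y
  linarith [h y]

lemma dotProduct_inv_mulVec_le_of_smul_le (hA : A.PosDef) (hB : B.PosDef) {c : ℝ} (hc : 0 < c)
    (h : ∀ x, c * (x ⬝ᵥ A *ᵥ x) ≤ x ⬝ᵥ B *ᵥ x) (x : n → ℝ) :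
    x ⬝ᵥ B⁻¹ *ᵥ x ≤ c⁻¹ * (x ⬝ᵥ A⁻¹ *ᵥ x) := by
  have := (hA.smul hc).dotProduct_inv_mulVec_le_of_le hB
    (fun x => (dotProduct_smul_mulVec c A x).trans_le (h x)) x
  rwa [inv_smul_of_ne_zero hc.ne' hA.det_pos.ne'.isUnit, dotProduct_smul_mulVec] at this

lemma le_dotProduct_inv_mulVec_of_le_smul (hA : A.PosDef) (hB : B.PosDef) {c : ℝ} (hc : 0 < c)
    (h : ∀ x, x ⬝ᵥ A *ᵥ x ≤ c * (x ⬝ᵥ B *ᵥ x)) (x : n → ℝ) :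
    c⁻¹ * (x ⬝ᵥ B⁻¹ *ᵥ x) ≤ x ⬝ᵥ A⁻¹ *ᵥ x := by
  have := hA.dotProduct_inv_mulVec_le_of_le (hB.smul hc)
    (fun x => (h x).trans_eq (dotProduct_smul_mulVec c B x).symm) x
  rwa [inv_smul_of_ne_zero hc.ne' hB.det_pos.ne'.isUnit, dotProduct_smul_mulVec] at this

end PosDef

end Matrix

/-- Loewner bounds for the augmented Schur complement against the scaled mass matrix. -/
theorem stmt_10 {m : ℕ} (S W : Matrix (Fin m) (Fin m) ℝ)
    (hS : S.PosDef) (hW : W.PosDef)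
    (d D : ℝ) (hd : 0 < d) (hdD : d ≤ D)
    (h1 : ∀ x : Fin m → ℝ, d * (x ⬝ᵥ W.mulVec x) ≤ x ⬝ᵥ S.mulVec x)
    (h2 : ∀ x : Fin m → ℝ, x ⬝ᵥ S.mulVec x ≤ D * (x ⬝ᵥ W.mulVec x))
    (γ : ℝ) (hγ : 0 ≤ γ)
    (Sγ Wγ : Matrix (Fin m) (Fin m) ℝ)
    (hSγ : Sγ = (S⁻¹ + γ • W⁻¹)⁻¹) (hWγ : Wγ = ((1 + γ) • W⁻¹)⁻¹) :
    (∀ x : Fin m → ℝ,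
      ((1 + γ) * d / (1 + γ * d)) * (x ⬝ᵥ Wγ.mulVec x) ≤ x ⬝ᵥ Sγ.mulVec x) ∧
    (∀ x : Fin m → ℝ,
      x ⬝ᵥ Sγ.mulVec x ≤ ((1 + γ) * D / (1 + γ * D)) * (x ⬝ᵥ Wγ.mulVec x)) := by
  have hD : 0 < D := hd.trans_le hdD
  have hSinv_le := hW.dotProduct_inv_mulVec_le_of_smul_le hS hd h1
  have hSinv_ge := hS.le_dotProduct_inv_mulVec_of_le_smul hW hD h2
  have hA : (S⁻¹ + γ • W⁻¹).PosDef := hS.inv.add_posSemidef (hW.inv.posSemidef.smul hγ)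
  have hA_quad (x : Fin m → ℝ) :
      x ⬝ᵥ (S⁻¹ + γ • W⁻¹) *ᵥ x = x ⬝ᵥ S⁻¹ *ᵥ x + γ * (x ⬝ᵥ W⁻¹ *ᵥ x) := by
    rw [add_mulVec, dotProduct_add, dotProduct_smul_mulVec]
  have hW_inv_inv : W⁻¹⁻¹ = W := nonsing_inv_nonsing_inv W hW.det_pos.ne'.isUnit
  have hWγ_quad (x : Fin m → ℝ) : x ⬝ᵥ Wγ *ᵥ x = (1 + γ)⁻¹ * (x ⬝ᵥ W *ᵥ x) := by
    rw [hWγ, inv_smul_of_ne_zero (by positivity) hW.inv.det_pos.ne'.isUnit, hW_inv_inv,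
      dotProduct_smul_mulVec]
  subst hSγ
  refine ⟨fun x => ?_, fun x => ?_⟩
  · have := hA.le_dotProduct_inv_mulVec_of_le_smul hW.inv (c := d⁻¹ + γ) (by positivity)
      (fun x => by rw [hA_quad, add_mul]; gcongr; exact hSinv_le x) x
    rw [hWγ_quad]
    convert this using 1
    rw [hW_inv_inv]
    field_simp
  · have := hW.inv.dotProduct_inv_mulVec_le_of_smul_le hA (c := D⁻¹ + γ) (by positivity)
      (fun x => by rw [hA_quad, add_mul]; gcongr; exact hSinv_ge x) x
    rw [hWγ_quad]
    convert this using 1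
    rw [hW_inv_inv]
    field_simp
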